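/- Let E ∈ ℝ and k̂, ε̂ ∈ ℝ³, and define the Gaussian-pulse vector potential a(r,t) = −E · g(2π⟨k̂,r⟩, t) · ε̂ where g(x,t) = ∫_{(−∞, t]} e^{−(x−s)²} cos(x−s) ds. Then for all (r,t) ∈ ℝ³ × ℝ the spatial divergence satisfies Σ_{i=1}^{3} ∂_{r_i} a_i(r,t) = 2π E · e^{−(2π⟨k̂,r⟩ − t)²} cos(2π⟨k̂,r⟩ − t) · ⟨k̂, ε̂⟩. In particular, if ⟨k̂, ε̂⟩ = 0, then the divergence of a vanishes identically. -/

import Mathlib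

open Real MeasureTheory RealInnerProductSpace

/-!
Each component of `a` has the plane-wave form `ψ(⟪k, r⟫) εᵢ`, so by the chain rule its divergence
is `ψ'(⟪k, r⟫) ⟪k, ε⟫`. For the amplitude, the substitution `u = x - s` gives
`g(x, t) = ∫_{[x - t, ∞)} e^{-u²} cos u du`, whose `x`-derivative is `-e^{-(x-t)²} cos (x - t)`
by the fundamental theorem of calculus.
-/

section IntegralCalculus

variable {E : Type*} [NormedAddCommGroup E] [NormedSpace ℝ E] {f : ℝ → E}

theorem hasDerivAt_integral_Iic [CompleteSpace E] (hf : Integrable f) {y : ℝ}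
    (hfy : ContinuousAt f y) :
    HasDerivAt (fun y => ∫ u in Set.Iic y, f u) (f y) y := by
  have hsplit : (fun y => ∫ u in Set.Iic y, f u) =
      fun y => (∫ u in Set.Iic 0, f u) + ∫ u in (0 : ℝ)..y, f u := by
    funext y
    rw [← intervalIntegral.integral_Iic_sub_Iic hf.integrableOn hf.integrableOn]
    abel
  rw [hsplit]
  exact (intervalIntegral.integral_hasDerivAt_right hf.intervalIntegrable
    hf.aestronglyMeasurable.stronglyMeasurableAtFilter hfy).const_add _

theorem hasDerivAt_integral_Ici [CompleteSpace E] (hf : Integrable f) {y : ℝ}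
    (hfy : ContinuousAt f y) :
    HasDerivAt (fun y => ∫ u in Set.Ici y, f u) (-f y) y := by
  have hsplit : (fun y => ∫ u in Set.Ici y, f u) =
      fun y => (∫ u, f u) - ∫ u in Set.Iic y, f u := by
    funext y
    rw [integral_Iic_eq_integral_Iio,
      ← intervalIntegral.integral_Iio_add_Ici hf.integrableOn hf.integrableOn]
    abel
  rw [hsplit]
  exact (hasDerivAt_integral_Iic hf hfy).const_sub _

theorem integral_Iic_comp_sub_left (x t : ℝ) :
    ∫ s in Set.Iic t, f (x - s) = ∫ u in Set.Ici (x - t), f u := by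
  have hpre : (fun s => x - s) ⁻¹' Set.Ici (x - t) = Set.Iic t := by
    ext s; simp
  rw [← hpre, (Measure.measurePreserving_sub_left volume x).setIntegral_preimage_emb
    (measurableEmbedding_subLeft x)]

theorem hasDerivAt_integral_Iic_comp_sub_left [CompleteSpace E] (hf : Integrable f) {x : ℝ}
    (t : ℝ) (hfx : ContinuousAt f (x - t)) :
    HasDerivAt (fun x => ∫ s in Set.Iic t, f (x - s)) (-f (x - t)) x := by
  simp_rw [integral_Iic_comp_sub_left]
  exact (hasDerivAt_integral_Ici hf hfx).comp_sub_const x t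

end IntegralCalculus

theorem integrable_exp_neg_sq_mul_cos : Integrable fun u : ℝ => exp (-u ^ 2) * cos u := by
  have hgauss : Integrable fun u : ℝ => exp (-u ^ 2) := by
    simpa using integrable_exp_neg_mul_sq one_pos
  refine hgauss.mono' (by fun_prop) (Filter.Eventually.of_forall fun u => ?_)
  rw [norm_mul, norm_of_nonneg (exp_pos _).le]
  exact mul_le_of_le_one_right (exp_pos _).le (abs_cos_le_one u)

section PlaneWave

variable {ι : Type*} [Fintype ι] [DecidableEq ι]

theorem hasDerivAt_inner_toLp_update (k r : EuclideanSpace ℝ ι) (i : ι) (x : ℝ) :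
    HasDerivAt (fun x => ⟪k, WithLp.toLp 2 (Function.update r i x)⟫) (k i) x := by
  have hline : HasDerivAt (fun x => WithLp.toLp 2 (Function.update r.ofLp i x))
      (EuclideanSpace.single i 1) x :=
    (PiLp.continuousLinearEquiv 2 ℝ fun _ : ι => ℝ).symm.hasFDerivAt.comp_hasDerivAt x
      (hasDerivAt_update r.ofLp i x)
  simpa [EuclideanSpace.inner_single_right] using (hasDerivAt_const x k).inner ℝ hline

theorem sum_deriv_comp_inner_smul {ψ : ℝ → ℝ} {ψ' : ℝ} (k ε r : EuclideanSpace ℝ ι)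
    (hψ : HasDerivAt ψ ψ' ⟪k, r⟫) :
    ∑ i, deriv (fun x => (ψ ⟪k, WithLp.toLp 2 (Function.update r i x)⟫ • ε) i) (r i) =
      ψ' * ⟪k, ε⟫ := by
  have hpartial : ∀ i,
      HasDerivAt (fun x => (ψ ⟪k, WithLp.toLp 2 (Function.update r i x)⟫ • ε) i)
        (ψ' * k i * ε i) (r i) := by
    intro i
    have hψ' : HasDerivAt ψ ψ' ⟪k, WithLp.toLp 2 (Function.update r i (r i))⟫ := by
      simpa using hψ
    simpa using ((hψ'.comp (r i) (hasDerivAt_inner_toLp_update k r i (r i))).mul_const (ε i))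
  simp_rw [fun i => (hpartial i).deriv, mul_assoc, ← Finset.mul_sum]
  simp [PiLp.inner_apply, mul_comm]

end PlaneWave

/-- The spatial divergence of the Gaussian-pulse vector potential
`a(r,t) = −E g(2π⟨k̂,r⟩, t) ε̂`, with `g(x,t) = ∫_{(−∞,t]} e^{−(x−s)²} cos(x−s) ds`, equals
`2πE e^{−(2π⟨k̂,r⟩−t)²} cos(2π⟨k̂,r⟩−t) ⟨k̂,ε̂⟩`; in particular it vanishes identically
when `⟨k̂,ε̂⟩ = 0`. -/
theorem gaussian_pulse_divergence
    (E : ℝ) (k ε : EuclideanSpace ℝ (Fin 3))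
    (g : ℝ → ℝ → ℝ)
    (hg : ∀ x t, g x t = ∫ s in Set.Iic t, Real.exp (-(x - s) ^ 2) * Real.cos (x - s))
    (a : EuclideanSpace ℝ (Fin 3) → ℝ → EuclideanSpace ℝ (Fin 3))
    (ha : ∀ r t, a r t = (-(E * g (2 * Real.pi * ⟪k, r⟫) t)) • ε) :
    (∀ (r : EuclideanSpace ℝ (Fin 3)) (t : ℝ),
      ∑ i : Fin 3, deriv (fun x : ℝ => a (WithLp.toLp 2 (Function.update r i x)) t i) (r i) =
        2 * Real.pi * E * Real.exp (-(2 * Real.pi * ⟪k, r⟫ - t) ^ 2) *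
          Real.cos (2 * Real.pi * ⟪k, r⟫ - t) * ⟪k, ε⟫) ∧
    (⟪k, ε⟫ = 0 → ∀ (r : EuclideanSpace ℝ (Fin 3)) (t : ℝ),
      ∑ i : Fin 3, deriv (fun x : ℝ => a (WithLp.toLp 2 (Function.update r i x)) t i) (r i) = 0) := by
  have hdiv : ∀ (r : EuclideanSpace ℝ (Fin 3)) (t : ℝ),
      ∑ i : Fin 3, deriv (fun x : ℝ => a (WithLp.toLp 2 (Function.update r i x)) t i) (r i) =
        2 * π * E * exp (-(2 * π * ⟪k, r⟫ - t) ^ 2) * cos (2 * π * ⟪k, r⟫ - t) * ⟪k, ε⟫ := by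
    intro r t
    have hg' : HasDerivAt (fun x => g x t)
        (-(exp (-(2 * π * ⟪k, r⟫ - t) ^ 2) * cos (2 * π * ⟪k, r⟫ - t))) (2 * π * ⟪k, r⟫) := by
      simp_rw [hg]
      exact hasDerivAt_integral_Iic_comp_sub_left integrable_exp_neg_sq_mul_cos t (by fun_prop)
    have hamplitude : HasDerivAt (fun y => -(E * g (2 * π * y) t))
        (2 * π * E * exp (-(2 * π * ⟪k, r⟫ - t) ^ 2) * cos (2 * π * ⟪k, r⟫ - t)) ⟪k, r⟫ :=
      ((hg'.comp _ ((hasDerivAt_id _).const_mul (2 * π))).const_mul E).neg.congr_deriv (by ring)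
    simp_rw [ha]
    exact sum_deriv_comp_inner_smul k ε r hamplitude
  exact ⟨hdiv, fun hkε r t => by rw [hdiv, hkε, mul_zero]⟩
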